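/- Identifiability of the VI estimator: if the smallest eigenvalue λ₁ of the Gram matrix 𝕎 = (1/T) Σ_{t=1}^T w_t w_tᵀ is strictly positive, then there is exactly one θ̂ ∈ Θ such that ⟨F_T(θ), θ − θ̂⟩ ≥ 0 for all θ ∈ Θ; that is, the weak solution of VI[F_T, Θ] exists and is unique. -/

import Mathlib

/-!
`F_T` is the gradient of the potential `Φ(θ) = (1/T) ∑ₜ (G(⟪wₜ, θ⟫) − yₜ ⟪wₜ, θ⟫)`, where `G` is
an antiderivative of `g`. Since `g' ≥ m_g`, `F_T` is strongly monotone with modulus `m_g λ₁`.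
A minimiser of `Φ` over the compact set `Θ` is a weak solution, because a monotone gradient gives
`Φ θ − Φ θ̂ ≤ ⟪F_T θ, θ − θ̂⟫`. Two weak solutions force `⟪F_T p, θ̂₂ − θ̂₁⟫ = 0` at every
point `p` strictly between them, which strict monotonicity allows only if `θ̂₁ = θ̂₂`.
-/

open Finset
open scoped RealInnerProductSpace

section WeakVI

variable {E : Type*} [NormedAddCommGroup E] [InnerProductSpace ℝ E] {F : E → E} {Θ : Set E}

def IsWeakVISolution (F : E → E) (Θ : Set E) (x : E) : Prop :=
  x ∈ Θ ∧ ∀ θ ∈ Θ, 0 ≤ ⟪F θ, θ - x⟫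

theorem IsWeakVISolution.inner_eq_zero (hΘ : Convex ℝ Θ) {x₁ x₂ : E}
    (h₁ : IsWeakVISolution F Θ x₁) (h₂ : IsWeakVISolution F Θ x₂) {s : ℝ}
    (hs : s ∈ Set.Ioo 0 1) :
    ⟪F (x₁ + s • (x₂ - x₁)), x₂ - x₁⟫ = 0 := by
  have hp : x₁ + s • (x₂ - x₁) ∈ Θ := hΘ.add_smul_sub_mem h₁.1 h₂.1 (Set.Ioo_subset_Icc_self hs)
  have e₁ : x₁ + s • (x₂ - x₁) - x₁ = s • (x₂ - x₁) := by module
  have e₂ : x₁ + s • (x₂ - x₁) - x₂ = (s - 1) • (x₂ - x₁) := by module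
  have i₁ := h₁.2 _ hp
  have i₂ := h₂.2 _ hp
  rw [e₁, real_inner_smul_right] at i₁
  rw [e₂, real_inner_smul_right] at i₂
  nlinarith [hs.1, hs.2]

theorem IsWeakVISolution.unique (hΘ : Convex ℝ Θ) (hF : ∀ a b, a ≠ b → 0 < ⟪F a - F b, a - b⟫)
    {x₁ x₂ : E} (h₁ : IsWeakVISolution F Θ x₁) (h₂ : IsWeakVISolution F Θ x₂) : x₁ = x₂ := by
  by_contra hne
  set u := x₂ - x₁
  have hdiff : x₁ + (3 / 4 : ℝ) • u - (x₁ + (1 / 4 : ℝ) • u) = (1 / 2 : ℝ) • u := by module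
  have hu : (1 / 2 : ℝ) • u ≠ 0 := smul_ne_zero (by norm_num) (sub_ne_zero.2 (Ne.symm hne))
  have hpos := hF _ _ (sub_ne_zero.1 (hdiff ▸ hu))
  rw [hdiff, real_inner_smul_right, inner_sub_left,
    h₁.inner_eq_zero hΘ h₂ (by norm_num), h₁.inner_eq_zero hΘ h₂ (by norm_num)] at hpos
  norm_num at hpos

theorem sub_le_inner_of_hasFDerivAt {Φ : E → ℝ} (hΦ : ∀ x, HasFDerivAt Φ (innerSL ℝ (F x)) x)
    (hF : ∀ a b, 0 ≤ ⟪F a - F b, a - b⟫) (a b : E) : Φ b - Φ a ≤ ⟪F b, b - a⟫ := by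
  set v := b - a
  have hline (s : ℝ) : HasDerivAt (fun s : ℝ => Φ (a + s • v)) ⟪F (a + s • v), v⟫ s := by
    have h := (hΦ (a + s • v)).comp_hasDerivAt s (((hasDerivAt_id s).smul_const v).const_add a)
    rw [innerSL_apply_apply, one_smul] at h
    exact h
  obtain ⟨c, hc, hslope⟩ := exists_hasDerivAt_eq_slope _ _ one_pos
    (continuous_iff_continuousAt.2 fun s => (hline s).continuousAt).continuousOn
    (fun s _ => hline s)
  have hmono := hF b (a + c • v)
  have e : b - (a + c • v) = (1 - c) • v := by module
  rw [e, real_inner_smul_right, inner_sub_left] at hmono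
  have hab : a + v = b := add_sub_cancel a b
  simp only [zero_smul, add_zero, one_smul, hab, sub_zero, div_one] at hslope
  nlinarith [hc.2]

theorem exists_isWeakVISolution_of_hasFDerivAt {Φ : E → ℝ}
    (hΦ : ∀ x, HasFDerivAt Φ (innerSL ℝ (F x)) x) (hF : ∀ a b, 0 ≤ ⟪F a - F b, a - b⟫)
    (hne : Θ.Nonempty) (hcomp : IsCompact Θ) : ∃ x, IsWeakVISolution F Θ x := by
  have hcont : Continuous Φ := continuous_iff_continuousAt.2 fun x => (hΦ x).continuousAt
  obtain ⟨x, hx, hmin⟩ := hcomp.exists_isMinOn hne hcont.continuousOn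
  exact ⟨x, hx, fun θ hθ => (sub_nonneg.2 (hmin hθ)).trans (sub_le_inner_of_hasFDerivAt hΦ hF x θ)⟩

theorem iInf_sphere_mul_sq_norm_le {f : E → ℝ} (hf : ∀ (r : ℝ) v, f (r • v) = r ^ 2 * f v)
    (hbdd : BddBelow (Set.range fun v : Metric.sphere (0 : E) 1 => f v)) (u : E) :
    (⨅ v : Metric.sphere (0 : E) 1, f v) * ‖u‖ ^ 2 ≤ f u := by
  rcases eq_or_ne u 0 with rfl | hu
  · simpa using (hf 0 0).ge
  · have hunit : ‖u‖⁻¹ • u ∈ Metric.sphere (0 : E) 1 := by simp [norm_smul, hu]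
    calc (⨅ v : Metric.sphere (0 : E) 1, f v) * ‖u‖ ^ 2
        ≤ f (‖u‖⁻¹ • u) * ‖u‖ ^ 2 := by gcongr; exact ciInf_le hbdd ⟨_, hunit⟩
      _ = f u := by
        rw [hf, inv_pow, mul_right_comm, inv_mul_cancel₀ (pow_ne_zero 2 (norm_ne_zero_iff.2 hu)),
          one_mul]

end WeakVI

theorem mul_sq_le_sub_mul_sub_of_le_deriv {g g' : ℝ → ℝ} {m : ℝ}
    (hg : ∀ x, HasDerivAt g (g' x) x) (hm : ∀ x, m ≤ g' x) (a b : ℝ) :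
    m * (a - b) ^ 2 ≤ (g a - g b) * (a - b) := by
  have hmono : Monotone fun x => g x - m * x :=
    monotone_of_hasDerivAt_nonneg (f' := fun x => g' x - m)
      (fun x => by
        have h := (hg x).sub ((hasDerivAt_id x).const_mul m)
        rw [mul_one] at h
        exact h)
      (fun x => sub_nonneg.2 (hm x))
  rcases le_total a b with hab | hab
  · nlinarith [hmono hab]
  · nlinarith [hmono hab]

section GLM

variable {E ι : Type*} [NormedAddCommGroup E] [InnerProductSpace ℝ E]
  (c : ℝ) (s : Finset ι) (w : ι → E) (y : ι → ℝ)

def glmField (g : ℝ → ℝ) (θ : E) : E :=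
  c • ∑ t ∈ s, (g ⟪w t, θ⟫ - y t) • w t

def glmPotential (G : ℝ → ℝ) (θ : E) : ℝ :=
  c * ∑ t ∈ s, (G ⟪w t, θ⟫ - y t * ⟪w t, θ⟫)

theorem inner_glmField (g : ℝ → ℝ) (θ u : E) :
    ⟪glmField c s w y g θ, u⟫ = c * ∑ t ∈ s, (g ⟪w t, θ⟫ - y t) * ⟪w t, u⟫ := by
  simp only [glmField, real_inner_smul_left, sum_inner]

theorem hasFDerivAt_glmPotential {g G : ℝ → ℝ} (hG : ∀ x, HasDerivAt G (g x) x) (θ : E) :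
    HasFDerivAt (glmPotential c s w y G) (innerSL ℝ (glmField c s w y g θ)) θ := by
  have hterm (t : ι) : HasFDerivAt (fun θ => G ⟪w t, θ⟫ - y t * ⟪w t, θ⟫)
      ((g ⟪w t, θ⟫ - y t) • innerSL ℝ (w t)) θ := by
    have hlin := (innerSL ℝ (w t)).hasFDerivAt (x := θ)
    rw [sub_smul]
    exact ((hG _).comp_hasFDerivAt θ hlin).sub (hlin.const_mul (y t))
  refine ((HasFDerivAt.fun_sum (u := s) fun t _ => hterm t).const_mul c).congr_fderiv ?_
  ext u
  simp only [smul_apply, _root_.sum_apply, coe_innerSL_apply, smul_eq_mul, inner_glmField]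

theorem mul_sum_inner_sq_le_inner_glmField_sub {g : ℝ → ℝ} {m : ℝ} (hc : 0 ≤ c)
    (hg : ∀ a b, m * (a - b) ^ 2 ≤ (g a - g b) * (a - b)) (θ₁ θ₂ : E) :
    m * (c * ∑ t ∈ s, ⟪w t, θ₁ - θ₂⟫ ^ 2)
      ≤ ⟪glmField c s w y g θ₁ - glmField c s w y g θ₂, θ₁ - θ₂⟫ := by
  rw [inner_sub_left, inner_glmField, inner_glmField, ← mul_sub, ← sum_sub_distrib,
    mul_left_comm, mul_sum]
  gcongr with t
  rw [inner_sub_right]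
  linear_combination hg ⟪w t, θ₁⟫ ⟪w t, θ₂⟫

theorem iInf_sphere_mul_sq_norm_le_sum_inner_sq (hc : 0 ≤ c) (u : E) :
    (⨅ v : Metric.sphere (0 : E) 1, c * ∑ t ∈ s, ⟪w t, (v : E)⟫ ^ 2) * ‖u‖ ^ 2
      ≤ c * ∑ t ∈ s, ⟪w t, u⟫ ^ 2 :=
  iInf_sphere_mul_sq_norm_le (f := fun u => c * ∑ t ∈ s, ⟪w t, u⟫ ^ 2)
    (fun r v => by simp only [real_inner_smul_right, mul_pow, ← mul_sum]; ring)
    ⟨0, by rintro _ ⟨v, rfl⟩; positivity⟩ u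

end GLM

theorem vi_estimator_identifiable_general
    (T d : ℕ)
    (w : ℕ → EuclideanSpace ℝ (Fin d)) (y : ℕ → ℝ)
    (g g' : ℝ → ℝ) (mg : ℝ) (hmg : 0 < mg)
    (hg_deriv : ∀ x, HasDerivAt g (g' x) x)
    (hg'_bound : ∀ x, mg ≤ g' x)
    (F : EuclideanSpace ℝ (Fin d) → EuclideanSpace ℝ (Fin d))
    (hF : ∀ θ, F θ = (T : ℝ)⁻¹ • ∑ t ∈ Finset.Icc 1 T, (g ⟪w t, θ⟫ - y t) • w t)
    (Θ : Set (EuclideanSpace ℝ (Fin d)))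
    (hne : Θ.Nonempty) (hconv : Convex ℝ Θ) (hcomp : IsCompact Θ)
    (lam1 : ℝ)
    (hlam1 : lam1 =
      ⨅ v : Metric.sphere (0 : EuclideanSpace ℝ (Fin d)) 1,
        (T : ℝ)⁻¹ * ∑ t ∈ Finset.Icc 1 T, ⟪w t, (v : EuclideanSpace ℝ (Fin d))⟫ ^ 2)
    (hpos : 0 < lam1) :
    ∃! θhat, θhat ∈ Θ ∧ ∀ θ ∈ Θ, 0 ≤ ⟪F θ, θ - θhat⟫ := by
  have hFglm : F = glmField (T : ℝ)⁻¹ (Icc 1 T) w y g := funext hF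
  have hTinv : (0 : ℝ) ≤ (T : ℝ)⁻¹ := by positivity
  have hstrong (a b : EuclideanSpace ℝ (Fin d)) : mg * lam1 * ‖a - b‖ ^ 2 ≤ ⟪F a - F b, a - b⟫ :=
    calc mg * lam1 * ‖a - b‖ ^ 2
        ≤ mg * ((T : ℝ)⁻¹ * ∑ t ∈ Icc 1 T, ⟪w t, a - b⟫ ^ 2) := by
          rw [mul_assoc, hlam1]
          exact mul_le_mul_of_nonneg_left
            (iInf_sphere_mul_sq_norm_le_sum_inner_sq _ (Icc 1 T) w hTinv _) hmg.le
      _ ≤ _ := hFglm ▸ mul_sum_inner_sq_le_inner_glmField_sub _ (Icc 1 T) w y hTinv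
          (mul_sq_le_sub_mul_sub_of_le_deriv hg_deriv hg'_bound) a b
  have hg : Continuous g := continuous_iff_continuousAt.2 fun x => (hg_deriv x).continuousAt
  have hG (x : ℝ) : HasDerivAt (fun x => ∫ s in (0 : ℝ)..x, g s) (g x) x :=
    (hg.integral_hasStrictDerivAt 0 x).hasDerivAt
  obtain ⟨θhat, hθhat⟩ := exists_isWeakVISolution_of_hasFDerivAt
    (hFglm ▸ hasFDerivAt_glmPotential (T : ℝ)⁻¹ (Icc 1 T) w y hG)
    (fun a b => (by positivity : (0 : ℝ) ≤ _).trans (hstrong a b)) hne hcomp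
  have hstrict (a b : EuclideanSpace ℝ (Fin d)) (hab : a ≠ b) : 0 < ⟪F a - F b, a - b⟫ :=
    (by have := sub_ne_zero.2 hab; positivity : 0 < mg * lam1 * ‖a - b‖ ^ 2).trans_le (hstrong a b)
  exact ⟨θhat, hθhat, fun θ hθ => IsWeakVISolution.unique hconv hstrict hθ hθhat⟩

/-- Identifiability of the VI estimator: if the smallest
eigenvalue `λ₁` of the Gram matrix `𝕎 = (1/T) ∑ₜ wₜ wₜᵀ` (characterized as the
minimum Rayleigh quotient over the unit sphere) is strictly positive, then the weak
solution of `VI[F_T, Θ]` exists and is unique, where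
`F_T(θ) = (1/T) ∑ₜ wₜ (g(⟪wₜ, θ⟫) − yₜ)`. -/
theorem vi_estimator_identifiable
    (T d : ℕ) (hT : 1 ≤ T) (hd : 1 ≤ d)
    (w : ℕ → EuclideanSpace ℝ (Fin d)) (y : ℕ → ℝ)
    (g g' : ℝ → ℝ) (mg : ℝ) (hmg : 0 < mg)
    (hg_deriv : ∀ x, HasDerivAt g (g' x) x)
    (hg'_bound : ∀ x, mg ≤ g' x)
    (F : EuclideanSpace ℝ (Fin d) → EuclideanSpace ℝ (Fin d))
    (hF : ∀ θ, F θ = (T : ℝ)⁻¹ • ∑ t ∈ Finset.Icc 1 T, (g ⟪w t, θ⟫ - y t) • w t)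
    (Θ : Set (EuclideanSpace ℝ (Fin d)))
    (hne : Θ.Nonempty) (hconv : Convex ℝ Θ) (hcomp : IsCompact Θ)
    (lam1 : ℝ)
    (hlam1 : lam1 =
      ⨅ v : Metric.sphere (0 : EuclideanSpace ℝ (Fin d)) 1,
        (T : ℝ)⁻¹ * ∑ t ∈ Finset.Icc 1 T, ⟪w t, (v : EuclideanSpace ℝ (Fin d))⟫ ^ 2)
    (hpos : 0 < lam1) :
    ∃! θhat, θhat ∈ Θ ∧ ∀ θ ∈ Θ, 0 ≤ ⟪F θ, θ - θhat⟫ :=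
  vi_estimator_identifiable_general T d w y g g' mg hmg hg_deriv hg'_bound F hF Θ hne hconv hcomp
    lam1 hlam1 hpos
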